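/- Let (F_k, m_k) be a DBM-sequence such that the underlying DBF-sequence (F_k) is SL-closed (for every φ ∈ SL there is k with F_k {φ}-closed) and free of deep contradictions. Then for every φ ∈ SL the limit P(φ) := lim_{k→∞} B_k(φ) exists, and the resulting function P: SL → [0,1] is a probability function: P(θ)=1 whenever ⊢θ classically, and P(θ∨φ)=P(θ)+P(φ) whenever ⊢¬(θ∧φ) classically. -/

import Mathlib

/-!
Common framework: Depth-Bounded Boolean Logics, depth-bounded trees/forests,
mass functions and depth-bounded belief functions.
-/

namespace DBB

/-- Sentences of a propositional language with propositional variables in `V`,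
connectives ¬, ∧, ∨ and the constant ⊥. -/
inductive Sentence (V : Type) : Type
  | var  : V → Sentence V
  | bot  : Sentence V
  | neg  : Sentence V → Sentence V
  | conj : Sentence V → Sentence V → Sentence V
  | disj : Sentence V → Sentence V → Sentence V
  deriving DecidableEq

variable {V : Type}

/-- Boolean evaluation of a sentence under a valuation of the variables. -/
def eval (v : V → Bool) : Sentence V → Bool
  | .var p => v p
  | .bot => false
  | .neg φ => !(eval v φ)
  | .conj φ ψ => eval v φ && eval v ψ
  | .disj φ ψ => eval v φ || eval v ψ

/-- Classical (semantic) consequence `Γ ⊢ φ`. -/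
def CC (Γ : Set (Sentence V)) (φ : Sentence V) : Prop :=
  ∀ v : V → Bool, (∀ γ ∈ Γ, eval v γ = true) → eval v φ = true

/-- The 0-depth consequence relation `Γ ⊢₀ φ`: closure of `Γ` under the standard
introduction and elimination rules for ¬, ∧, ∨, ⊥. -/
inductive Der0 : Set (Sentence V) → Sentence V → Prop
  | prem {Γ : Set (Sentence V)} {φ} (h : φ ∈ Γ) : Der0 Γ φ
  | andI {Γ φ ψ} : Der0 Γ φ → Der0 Γ ψ → Der0 Γ (.conj φ ψ)
  | andE1 {Γ φ ψ} : Der0 Γ (.conj φ ψ) → Der0 Γ φ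
  | andE2 {Γ φ ψ} : Der0 Γ (.conj φ ψ) → Der0 Γ ψ
  | orI1 {Γ φ ψ} : Der0 Γ φ → Der0 Γ (.disj φ ψ)
  | orI2 {Γ φ ψ} : Der0 Γ ψ → Der0 Γ (.disj φ ψ)
  | orE1 {Γ φ ψ} : Der0 Γ (.disj φ ψ) → Der0 Γ (.neg φ) → Der0 Γ ψ
  | orE2 {Γ φ ψ} : Der0 Γ (.disj φ ψ) → Der0 Γ (.neg ψ) → Der0 Γ φ
  | negAndI1 {Γ φ ψ} : Der0 Γ (.neg φ) → Der0 Γ (.neg (.conj φ ψ))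
  | negAndI2 {Γ φ ψ} : Der0 Γ (.neg ψ) → Der0 Γ (.neg (.conj φ ψ))
  | negAndE1 {Γ φ ψ} : Der0 Γ (.neg (.conj φ ψ)) → Der0 Γ φ → Der0 Γ (.neg ψ)
  | negAndE2 {Γ φ ψ} : Der0 Γ (.neg (.conj φ ψ)) → Der0 Γ ψ → Der0 Γ (.neg φ)
  | negOrI {Γ φ ψ} : Der0 Γ (.neg φ) → Der0 Γ (.neg ψ) → Der0 Γ (.neg (.disj φ ψ))
  | negOrE1 {Γ φ ψ} : Der0 Γ (.neg (.disj φ ψ)) → Der0 Γ (.neg φ)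
  | negOrE2 {Γ φ ψ} : Der0 Γ (.neg (.disj φ ψ)) → Der0 Γ (.neg ψ)
  | dnI {Γ φ} : Der0 Γ φ → Der0 Γ (.neg (.neg φ))
  | dnE {Γ φ} : Der0 Γ (.neg (.neg φ)) → Der0 Γ φ
  | botI {Γ φ} : Der0 Γ φ → Der0 Γ (.neg φ) → Der0 Γ .bot
  | botE {Γ φ} : Der0 Γ .bot → Der0 Γ φ

/-- The set of subsentences of a sentence. -/
def subs : Sentence V → Set (Sentence V)
  | .var p => {Sentence.var p}
  | .bot => {Sentence.bot}
  | .neg φ => insert (.neg φ) (subs φ)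
  | .conj φ ψ => insert (.conj φ ψ) (subs φ ∪ subs ψ)
  | .disj φ ψ => insert (.disj φ ψ) (subs φ ∪ subs ψ)

/-- Subsentences of a set of sentences. -/
def subsSet (Γ : Set (Sentence V)) : Set (Sentence V) := ⋃ γ ∈ Γ, subs γ

/-- The k-depth consequence relations `Γ ⊢ₖ φ`: for `k > 0`, `Γ ⊢ₖ φ` iff there is a
subsentence `β` of `Γ ∪ {φ}` such that `Γ, β ⊢_{k-1} φ` and `Γ, ¬β ⊢_{k-1} φ`. -/
def DerK : ℕ → Set (Sentence V) → Sentence V → Prop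
  | 0, Γ, φ => Der0 Γ φ
  | k+1, Γ, φ => ∃ β, β ∈ subsSet (insert φ Γ) ∧
      DerK k (insert β Γ) φ ∧ DerK k (insert (Sentence.neg β) Γ) φ

/-- Elements of `SL ∪ {*}`: `none` is the empty information `*`, `some γ` is the sentence `γ`.
`prems` gives the corresponding set of premises. -/
def prems : Option (Sentence V) → Set (Sentence V)
  | none => ∅
  | some γ => {γ}

/-- `r ⊢₀ φ` for `r ∈ SL ∪ {*}`. -/
def Der0O (r : Option (Sentence V)) (φ : Sentence V) : Prop := Der0 (prems r) φ

/-- `r ⊢ₖ φ` for `r ∈ SL ∪ {*}`. -/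
def DerKO (k : ℕ) (r : Option (Sentence V)) (φ : Sentence V) : Prop := DerK k (prems r) φ

/-- classical consequence from `r ∈ SL ∪ {*}`. -/
def CCO (r : Option (Sentence V)) (φ : Sentence V) : Prop := CC (prems r) φ

/-- `r ⊢₀ s` where also the conclusion may be the empty information `*`
(deriving `*` is trivial). -/
def Der0OO (r : Option (Sentence V)) : Option (Sentence V) → Prop
  | none => True
  | some φ => Der0O r φ

/-! ### Depth-bounded trees -/

/-- Binary trees whose internal nodes are labelled by the branching sentence `β`:
a node with branching sentence `β` and current information `α` has children carrying
the information `α ∧ β` and `α ∧ ¬β` respectively. -/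
inductive DBTree (V : Type) : Type
  | leaf : DBTree V
  | node : Sentence V → DBTree V → DBTree V → DBTree V
  deriving DecidableEq

/-- The information carried by a child of a node with information `r ∈ SL ∪ {*}` and
branching sentence `β`: `r ∧ β` (or just `β` when `r = *`). -/
def extend (r : Option (Sentence V)) (β : Sentence V) : Option (Sentence V) :=
  some (match r with
    | none => β
    | some α => Sentence.conj α β)

/-- The set `Le(T)` of labels of the leaves of a tree `t` rooted in `r ∈ SL ∪ {*}`. -/
def leafLabels [DecidableEq V] : Option (Sentence V) → DBTree V → Finset (Option (Sentence V))
  | r, .leaf => {r}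
  | r, .node β t₁ t₂ =>
      leafLabels (extend r β) t₁ ∪ leafLabels (extend r (.neg β)) t₂

/-- The number of leaves of a tree. -/
def numLeaves : DBTree V → ℕ
  | .leaf => 1
  | .node _ t₁ t₂ => numLeaves t₁ + numLeaves t₂

/-- `Grow k t t'`: `t'` is obtained from `t` by expanding a (possibly empty) subset of the
depth-`k` leaves of `t`, each expanded leaf getting two children via some branching sentence. -/
inductive Grow : ℕ → DBTree V → DBTree V → Prop
  | keep (k : ℕ) : Grow k .leaf .leaf
  | expand (β : Sentence V) : Grow 0 .leaf (.node β .leaf .leaf)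
  | node {k : ℕ} {t₁ t₁' t₂ t₂' : DBTree V} (β : Sentence V) :
      Grow k t₁ t₁' → Grow k t₂ t₂' →
      Grow (k+1) (.node β t₁ t₂) (.node β t₁' t₂')

/-- A depth-bounded tree sequence (DBT-sequence): `T₀` is a single node, and `T_{k+1}` is
obtained from `T_k` by branching at least one node of depth `k`. -/
structure DBTSeq (V : Type) where
  tree : ℕ → DBTree V
  init : tree 0 = DBTree.leaf
  grow : ∀ k, Grow k (tree k) (tree (k+1))
  progress : ∀ k, tree (k+1) ≠ tree k

/-- `t` is a tree of depth `k` belonging to some DBT-sequence. -/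
def IsDepthKTree (k : ℕ) (t : DBTree V) : Prop := ∃ S : DBTSeq V, S.tree k = t

/-- `r` decides `φ`: `r ⊢₀ φ` or `r ⊢₀ ¬φ`. -/
def Decides (r : Option (Sentence V)) (φ : Sentence V) : Prop :=
  Der0O r φ ∨ Der0O r (.neg φ)

/-- `|dec(Γ, φ)|`: the number of elements of `Γ` deciding `φ`. -/
noncomputable def decCount [DecidableEq V] (Γ : Finset (Option (Sentence V)))
    (φ : Sentence V) : ℕ := by
  classical exact (Γ.filter (fun α => Decides α φ)).card

/-- A tree rooted in `r` is `{φ}`-closed iff all its leaves decide `φ`. -/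
def TreeClosed [DecidableEq V] (r : Option (Sentence V)) (t : DBTree V) (φ : Sentence V) : Prop :=
  ∀ α ∈ leafLabels r t, Decides α φ

/-- A tree `t` of depth `k` rooted in `r` is `{φ}`-maximal iff no depth-`k` tree with the same
root has strictly more leaves deciding `φ`. -/
def TreeMaximal [DecidableEq V] (r : Option (Sentence V)) (k : ℕ) (t : DBTree V)
    (φ : Sentence V) : Prop :=
  ∀ t' : DBTree V, IsDepthKTree k t' →
    decCount (leafLabels r t') φ ≤ decCount (leafLabels r t) φ

/-- A tree rooted in `r` is free of deep contradictions iff every classically inconsistent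
leaf is already 0-depth inconsistent. -/
def TreeFreeDC [DecidableEq V] (r : Option (Sentence V)) (t : DBTree V) : Prop :=
  ∀ α ∈ leafLabels r t, CCO α Sentence.bot → Der0O α Sentence.bot

/-! ### Depth-bounded forests -/

/-- A depth-bounded forest sequence (DBF-sequence) based on the support set
`Supp ⊆ SL ∪ {*}`: a DBT-sequence rooted in `γ` for each `γ ∈ Supp`. -/
structure DBFSeq (V : Type) where
  Supp : Finset (Option (Sentence V))
  suppNE : Supp.Nonempty
  tree : Option (Sentence V) → ℕ → DBTree V
  init : ∀ γ ∈ Supp, tree γ 0 = DBTree.leaf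
  grow : ∀ γ ∈ Supp, ∀ k, Grow k (tree γ k) (tree γ (k+1))
  progress : ∀ γ ∈ Supp, ∀ k, tree γ (k+1) ≠ tree γ k

/-- `Le(F_k)`: the leaves of the depth-`k` forest of a DBF-sequence. -/
noncomputable def DBFSeq.leaves [DecidableEq V] (F : DBFSeq V) (k : ℕ) :
    Finset (Option (Sentence V)) := by
  classical exact F.Supp.biUnion (fun γ => leafLabels γ (F.tree γ k))

/-- The depth-`k` forest is `{φ}`-closed (tree-wise). -/
def DBFSeq.Closed [DecidableEq V] (F : DBFSeq V) (k : ℕ) (φ : Sentence V) : Prop :=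
  ∀ γ ∈ F.Supp, TreeClosed γ (F.tree γ k) φ

/-- The depth-`k` forest is `{φ}`-maximal (tree-wise). -/
def DBFSeq.Maximal [DecidableEq V] (F : DBFSeq V) (k : ℕ) (φ : Sentence V) : Prop :=
  ∀ γ ∈ F.Supp, TreeMaximal γ k (F.tree γ k) φ

/-- The depth-`k` forest is free of deep contradictions (tree-wise). -/
def DBFSeq.FreeDC [DecidableEq V] (F : DBFSeq V) (k : ℕ) : Prop :=
  ∀ γ ∈ F.Supp, TreeFreeDC γ (F.tree γ k)

/-- `MassStep m m' r t t'`: the mass function `m'` refines `m` along the expansion of `t`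
into `t'` (leaves keep their mass; the mass of an expanded leaf is split among its
two children). -/
inductive MassStep (m m' : Option (Sentence V) → ℝ) :
    Option (Sentence V) → DBTree V → DBTree V → Prop
  | keep {r : Option (Sentence V)} :
      m' r = m r → MassStep m m' r .leaf .leaf
  | split {r : Option (Sentence V)} {β : Sentence V} :
      m' (extend r β) + m' (extend r (.neg β)) = m r →
      MassStep m m' r .leaf (.node β .leaf .leaf)
  | node {r : Option (Sentence V)} {β : Sentence V} {t₁ t₁' t₂ t₂' : DBTree V} :
      MassStep m m' (extend r β) t₁ t₁' →
      MassStep m m' (extend r (.neg β)) t₂ t₂' →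
      MassStep m m' r (.node β t₁ t₂) (.node β t₁' t₂')

/-- A depth-bounded mass sequence (DBM-sequence): a DBF-sequence free of deep contradictions
together with probability mass functions `m_k` over `Le(F_k)` such that the mass of each leaf
of `F_k` is either kept (if it remains a leaf) or split among its two children in `F_{k+1}`. -/
structure DBMSeq (V : Type) [DecidableEq V] extends DBFSeq V where
  m : ℕ → Option (Sentence V) → ℝ
  nonneg : ∀ k, ∀ α ∈ toDBFSeq.leaves k, 0 ≤ m k α
  total : ∀ k, ∑ α ∈ toDBFSeq.leaves k, m k α = 1
  incZero : ∀ k, ∀ α ∈ toDBFSeq.leaves k, Der0O α Sentence.bot → m k α = 0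
  freeDC : ∀ k, toDBFSeq.FreeDC k
  massStep : ∀ γ ∈ toDBFSeq.Supp, ∀ k,
      MassStep (m k) (m (k+1)) γ (toDBFSeq.tree γ k) (toDBFSeq.tree γ (k+1))

/-- The k-depth belief function `B_k(φ) = m_k(b_k(φ))` where
`b_k(φ) = {α ∈ Le(F_k) : α ⊢₀ φ, α ⊬₀ ⊥}`. -/
noncomputable def DBMSeq.B [DecidableEq V] (M : DBMSeq V) (k : ℕ) (φ : Sentence V) : ℝ := by
  classical exact ∑ α ∈ M.toDBFSeq.leaves k,
    if Der0O α φ ∧ ¬ Der0O α Sentence.bot then M.m k α else 0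

/-- The k-depth plausibility function `Pl_k(φ) = m_k(pl_k(φ))` where
`pl_k(φ) = {α ∈ Le(F_k) : α ⊬₀ ¬φ}`. -/
noncomputable def DBMSeq.Pl [DecidableEq V] (M : DBMSeq V) (k : ℕ) (φ : Sentence V) : ℝ := by
  classical exact ∑ α ∈ M.toDBFSeq.leaves k,
    if ¬ Der0O α (Sentence.neg φ) then M.m k α else 0

/-! ### Auxiliary notions -/

/-- A probability function on `SL`: a `[0,1]`-valued function which is normalised on
classical tautologies and additive on classically incompatible disjuncts. -/
def IsProbability (P : Sentence V → ℝ) : Prop :=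
  (∀ φ, 0 ≤ P φ ∧ P φ ≤ 1) ∧
  (∀ φ, CC (∅ : Set (Sentence V)) φ → P φ = 1) ∧
  (∀ φ ψ, CC (∅ : Set (Sentence V)) (.neg (.conj φ ψ)) →
    P (.disj φ ψ) = P φ + P ψ)

/-- The literal on `p` prescribed by the valuation `v`. -/
def litOf (v : V → Bool) (p : V) : Sentence V :=
  if v p then .var p else .neg (.var p)

/-- Left-associated conjunction `φ ∧ ψ₁ ∧ ⋯ ∧ ψₙ`. -/
def listConj : Sentence V → List (Sentence V) → Sentence V
  | φ, [] => φ
  | φ, ψ :: l => listConj (.conj φ ψ) l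

/-- Left-associated disjunction `φ ∨ ψ₁ ∨ ⋯ ∨ ψₙ`. -/
def listDisj : Sentence V → List (Sentence V) → Sentence V
  | φ, [] => φ
  | φ, ψ :: l => listDisj (.disj φ ψ) l

/-- Conjunction of a list of sentences (`⊥` for the empty list, which is never used). -/
def conjList : List (Sentence V) → Sentence V
  | [] => .bot
  | ψ :: l => listConj ψ l

/-- Disjunction of a list of sentences (`⊥` for the empty list, which is never used). -/
def disjList : List (Sentence V) → Sentence V
  | [] => .bot
  | ψ :: l => listDisj ψ l

/-- `α` is an atom of the language: a maximal (classically consistent) conjunction of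
literals, with exactly one literal per propositional variable. -/
def IsAtom (α : Sentence V) : Prop :=
  ∃ (v : V → Bool) (l : List V), l.Nodup ∧ (∀ p : V, p ∈ l) ∧ l ≠ [] ∧
    α = conjList (l.map (litOf v))

/-- The conjunction `⋀_{i ∈ S} φ_i` of a finite set of indexed sentences. -/
def finsetConj {n : ℕ} (φ : Fin n → Sentence V) (S : Finset (Fin n)) : Sentence V :=
  conjList ((S.sort (· ≤ ·)).map φ)

/-- The finite set of subsentences of a sentence. -/
def subsF [DecidableEq V] : Sentence V → Finset (Sentence V)
  | .var p => {Sentence.var p}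
  | .bot => {Sentence.bot}
  | .neg φ => insert (.neg φ) (subsF φ)
  | .conj φ ψ => insert (.conj φ ψ) (subsF φ ∪ subsF ψ)
  | .disj φ ψ => insert (.disj φ ψ) (subsF φ ∪ subsF ψ)

/-- All branching sentences of the tree belong to `S`. -/
def BranchesIn [DecidableEq V] : DBTree V → Finset (Sentence V) → Prop
  | .leaf, _ => True
  | .node β t₁ t₂, S => β ∈ S ∧ BranchesIn t₁ S ∧ BranchesIn t₂ S


/-!
Once `F_k` is `{φ}`-closed, so is every later forest, and `B_k(φ)` no longer changes: a split leaf
decides `φ` the same way as its two children, which share its mass (a child that becomes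
0-inconsistent carries mass `0`). So `P(φ)` is the eventual value of `B_k(φ)`. At a stage closed
for the sentences at hand, a leaf of positive mass is 0-consistent, hence, the forest being free
of deep contradictions, has a classical model `v`; since it decides `φ`, it derives `φ` exactly
when `v ⊨ φ`. Thus `B_k` is an `m_k`-mixture of truth-value assignments, normalised on
tautologies and additive on incompatible disjunctions.
-/

end DBB

namespace Finset

variable {ι κ β : Type*} [DecidableEq κ] [AddCommGroup β] [PartialOrder β] [IsOrderedAddMonoid β]

theorem sum_biUnion_le_sum_sum {s : Finset ι} {t : ι → Finset κ} {f : κ → β}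
    (hf : ∀ x ∈ s.biUnion t, 0 ≤ f x) : ∑ x ∈ s.biUnion t, f x ≤ ∑ i ∈ s, ∑ x ∈ t i, f x := by
  classical
  induction s using Finset.induction_on with
  | empty => simp
  | insert a s ha ih =>
    rw [biUnion_insert] at hf ⊢
    have hinter : 0 ≤ ∑ x ∈ t a ∩ s.biUnion t, f x :=
      sum_nonneg fun x hx => hf x (mem_union_left _ (mem_of_mem_inter_left hx))
    calc ∑ x ∈ t a ∪ s.biUnion t, f x
        ≤ ∑ x ∈ t a ∪ s.biUnion t, f x + ∑ x ∈ t a ∩ s.biUnion t, f x :=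
          le_add_of_nonneg_right hinter
      _ = ∑ x ∈ t a, f x + ∑ x ∈ s.biUnion t, f x := sum_union_inter
      _ ≤ ∑ i ∈ insert a s, ∑ x ∈ t i, f x := by
          rw [sum_insert ha]
          exact add_le_add_right (ih fun x hx => hf x (mem_union_right _ hx)) _

theorem sum_biUnion_eq_sum_sum_of_le {s : Finset ι} {t : ι → Finset κ} {f g : κ → β}
    (hf : ∀ x ∈ s.biUnion t, 0 ≤ f x) (hfg : ∀ x ∈ s.biUnion t, f x ≤ g x)
    (hg : ∑ x ∈ s.biUnion t, g x = ∑ i ∈ s, ∑ x ∈ t i, g x) :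
    ∑ x ∈ s.biUnion t, f x = ∑ i ∈ s, ∑ x ∈ t i, f x := by
  refine (sum_biUnion_le_sum_sum hf).antisymm ?_
  have hgf := sum_biUnion_le_sum_sum (f := g - f) fun x hx => sub_nonneg.2 (hfg x hx)
  simp only [Pi.sub_apply, sum_sub_distrib, hg] at hgf
  exact sub_le_sub_iff_left _ |>.1 hgf

end Finset

namespace DBB

variable {V : Type}

open Relation

theorem Der0.subst {Δ Γ : Set (Sentence V)} {φ : Sentence V} (h : Der0 Δ φ)
    (hΔ : ∀ δ ∈ Δ, Der0 Γ δ) : Der0 Γ φ := by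
  induction h with
  | prem h => exact hΔ _ h
  | andI _ _ ih₁ ih₂ => exact .andI ih₁ ih₂
  | andE1 _ ih => exact .andE1 ih
  | andE2 _ ih => exact .andE2 ih
  | orI1 _ ih => exact .orI1 ih
  | orI2 _ ih => exact .orI2 ih
  | orE1 _ _ ih₁ ih₂ => exact .orE1 ih₁ ih₂
  | orE2 _ _ ih₁ ih₂ => exact .orE2 ih₁ ih₂
  | negAndI1 _ ih => exact .negAndI1 ih
  | negAndI2 _ ih => exact .negAndI2 ih
  | negAndE1 _ _ ih₁ ih₂ => exact .negAndE1 ih₁ ih₂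
  | negAndE2 _ _ ih₁ ih₂ => exact .negAndE2 ih₁ ih₂
  | negOrI _ _ ih₁ ih₂ => exact .negOrI ih₁ ih₂
  | negOrE1 _ ih => exact .negOrE1 ih
  | negOrE2 _ ih => exact .negOrE2 ih
  | dnI _ ih => exact .dnI ih
  | dnE _ ih => exact .dnE ih
  | botI _ _ ih₁ ih₂ => exact .botI ih₁ ih₂
  | botE _ ih => exact .botE ih

theorem Der0.sound {Γ : Set (Sentence V)} {φ : Sentence V} (h : Der0 Γ φ) (v : V → Bool)
    (hv : ∀ γ ∈ Γ, eval v γ = true) : eval v φ = true := by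
  induction h <;> simp_all [eval]

theorem der0O_extend {r : Option (Sentence V)} {β φ : Sentence V} (h : Der0O r φ) :
    Der0O (extend r β) φ := by
  cases r with
  | none => exact Der0.subst h (by simp [prems])
  | some a =>
    refine Der0.subst h fun δ hδ => ?_
    rw [Set.mem_singleton_iff.1 hδ]
    exact .andE1 (.prem rfl)

theorem decides_extend {r : Option (Sentence V)} {β φ : Sentence V} (h : Decides r φ) :
    Decides (extend r β) φ :=
  h.imp der0O_extend der0O_extend

theorem Decides.disj {α : Option (Sentence V)} {θ φ : Sentence V} (hθ : Decides α θ)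
    (hφ : Decides α φ) : Decides α (.disj θ φ) := by
  rcases hθ with hθ | hθ
  · exact .inl (.orI1 hθ)
  rcases hφ with hφ | hφ
  · exact .inl (.orI2 hφ)
  exact .inr (.negOrI hθ hφ)

theorem not_der0O_bot_of_model {α : Option (Sentence V)} {v : V → Bool}
    (hv : ∀ γ ∈ prems α, eval v γ = true) : ¬Der0O α .bot := fun h => by
  simpa [eval] using Der0.sound h v hv

theorem der0O_iff_eval {α : Option (Sentence V)} {ψ : Sentence V} {v : V → Bool}
    (hv : ∀ γ ∈ prems α, eval v γ = true) (hd : Decides α ψ) :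
    Der0O α ψ ↔ eval v ψ = true :=
  ⟨fun h => Der0.sound h v hv, fun hψ => hd.resolve_right fun h => by
    simpa [eval, hψ] using Der0.sound h v hv⟩

/-- `ReflTransGen HasLeftConjunct x b` says that `x` is a left-nested conjunction
`(⋯((b ∧ β₁) ∧ β₂) ⋯) ∧ βₙ`, the shape of every label below a node labelled `b`. -/
def HasLeftConjunct (y x : Sentence V) : Prop := ∃ γ, y = .conj x γ

theorem hasLeftConjunct_rightUnique : Relator.RightUnique (HasLeftConjunct (V := V)) := by
  rintro y x x' ⟨γ, rfl⟩ ⟨γ', h⟩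
  exact (Sentence.conj.inj h).1

theorem Sentence.neg_ne_self (β : Sentence V) : Sentence.neg β ≠ β := fun h => by
  have := congrArg sizeOf h
  simp only [Sentence.neg.sizeOf_spec] at this
  omega

theorem sizeOf_le_of_reflTransGen {x y : Sentence V} (h : ReflTransGen HasLeftConjunct y x) :
    sizeOf x ≤ sizeOf y := by
  induction h with
  | refl => exact le_rfl
  | tail _ hstep ih =>
    obtain ⟨γ, rfl⟩ := hstep
    simp only [Sentence.conj.sizeOf_spec] at ih
    omega

theorem exists_reflTransGen_of_mem_leafLabels [DecidableEq V] {b : Sentence V} {t : DBTree V}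
    {α : Option (Sentence V)} (h : α ∈ leafLabels (some b) t) :
    ∃ x, α = some x ∧ ReflTransGen HasLeftConjunct x b := by
  induction t generalizing b with
  | leaf => exact ⟨b, by simpa [leafLabels] using h, .refl⟩
  | node β t₁ t₂ ih₁ ih₂ =>
    rcases Finset.mem_union.1 h with h | h
    · obtain ⟨x, rfl, hx⟩ := ih₁ h
      exact ⟨x, rfl, hx.tail ⟨β, rfl⟩⟩
    · obtain ⟨x, rfl, hx⟩ := ih₂ h
      exact ⟨x, rfl, hx.tail ⟨.neg β, rfl⟩⟩

theorem eq_or_reflTransGen_of_reflTransGen_conj {a γ y : Sentence V}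
    (h : ReflTransGen HasLeftConjunct (.conj a γ) y) :
    y = .conj a γ ∨ ReflTransGen HasLeftConjunct a y := by
  rcases h.cases_head with h | ⟨z, ⟨γ', hz⟩, h⟩
  · exact .inl h.symm
  · obtain ⟨rfl, -⟩ := Sentence.conj.inj hz
    exact .inr h

theorem not_reflTransGen_conj_self {a γ : Sentence V} :
    ¬ReflTransGen HasLeftConjunct a (.conj a γ) := fun h => by
  have := sizeOf_le_of_reflTransGen h
  simp only [Sentence.conj.sizeOf_spec] at this
  omega

theorem disjoint_leafLabels_extend [DecidableEq V] (r : Option (Sentence V)) (β : Sentence V)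
    (t₁ t₂ : DBTree V) :
    Disjoint (leafLabels (extend r β) t₁) (leafLabels (extend r (.neg β)) t₂) := by
  rw [Finset.disjoint_left]
  intro α h₁ h₂
  obtain ⟨x, rfl, hx₁⟩ := exists_reflTransGen_of_mem_leafLabels h₁
  obtain ⟨x', hx', hx₂⟩ := exists_reflTransGen_of_mem_leafLabels h₂
  cases hx'
  -- both branch labels lie on the left spine of `x`, so one of them lies on the spine of the other
  have hcomp := hx₁.total_of_right_unique hasLeftConjunct_rightUnique hx₂
  cases r with
  | none =>
    change ReflTransGen _ β (.neg β) ∨ ReflTransGen _ (.neg β) β at hcomp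
    rcases hcomp with h | h
    · have := sizeOf_le_of_reflTransGen h
      simp only [Sentence.neg.sizeOf_spec] at this
      omega
    · rcases h.cases_head with h | ⟨z, ⟨γ, hz⟩, -⟩
      · exact Sentence.neg_ne_self β h
      · cases hz
  | some a =>
    rcases hcomp with h | h <;> rcases eq_or_reflTransGen_of_reflTransGen_conj h with h | h
    · exact Sentence.neg_ne_self β (Sentence.conj.inj h).2
    · exact not_reflTransGen_conj_self h
    · exact Sentence.neg_ne_self β (Sentence.conj.inj h).2.symm
    · exact not_reflTransGen_conj_self h

theorem mem_leafLabels_node [DecidableEq V] {r α : Option (Sentence V)} {β : Sentence V}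
    {t₁ t₂ : DBTree V} :
    α ∈ leafLabels r (.node β t₁ t₂) ↔
      α ∈ leafLabels (extend r β) t₁ ∨ α ∈ leafLabels (extend r (.neg β)) t₂ :=
  Finset.mem_union

theorem sum_leafLabels_node [DecidableEq V] {M : Type*} [AddCommMonoid M]
    (f : Option (Sentence V) → M) (r : Option (Sentence V)) (β : Sentence V) (t₁ t₂ : DBTree V) :
    ∑ α ∈ leafLabels r (.node β t₁ t₂), f α =
      ∑ α ∈ leafLabels (extend r β) t₁, f α + ∑ α ∈ leafLabels (extend r (.neg β)) t₂, f α :=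
  Finset.sum_union (disjoint_leafLabels_extend r β t₁ t₂)

theorem TreeClosed.grow [DecidableEq V] {k : ℕ} {r : Option (Sentence V)} {t t' : DBTree V}
    {φ : Sentence V} (hc : TreeClosed r t φ) (h : Grow k t t') : TreeClosed r t' φ := by
  induction h generalizing r with
  | keep => exact hc
  | expand β =>
    have hr : Decides r φ := hc r (Finset.mem_singleton_self r)
    intro α hα
    rcases mem_leafLabels_node.1 hα with hα | hα <;>
      rw [Finset.mem_singleton.1 hα] <;> exact decides_extend hr
  | node β _ _ ih₁ ih₂ =>
    intro α hα
    rcases mem_leafLabels_node.1 hα with hα | hα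
    · exact ih₁ (fun x hx => hc x (mem_leafLabels_node.2 (.inl hx))) α hα
    · exact ih₂ (fun x hx => hc x (mem_leafLabels_node.2 (.inr hx))) α hα

theorem MassStep.sum_eq [DecidableEq V] {m m' : Option (Sentence V) → ℝ}
    {r : Option (Sentence V)} {t t' : DBTree V} (h : MassStep m m' r t t') :
    ∑ α ∈ leafLabels r t', m' α = ∑ α ∈ leafLabels r t, m α := by
  induction h with
  | keep he => simpa [leafLabels] using he
  | split he =>
    rw [sum_leafLabels_node]
    simpa only [leafLabels, Finset.sum_singleton] using he
  | node _ _ ih₁ ih₂ => rw [sum_leafLabels_node, sum_leafLabels_node, ih₁, ih₂]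

open Classical in
noncomputable def beliefWeight (m : Option (Sentence V) → ℝ) (φ : Sentence V)
    (α : Option (Sentence V)) : ℝ :=
  if Der0O α φ ∧ ¬Der0O α .bot then m α else 0

open Classical in
theorem beliefWeight_extend {m : Option (Sentence V) → ℝ} {r : Option (Sentence V)}
    {β φ : Sentence V} (hd : Decides r φ) (h0 : Der0O (extend r β) .bot → m (extend r β) = 0) :
    beliefWeight m φ (extend r β) =
      if Der0O r φ ∧ ¬Der0O r .bot then m (extend r β) else 0 := by
  by_cases hb : Der0O r .bot
  · simp [beliefWeight, hb, der0O_extend hb]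
  by_cases hφ : Der0O r φ
  · by_cases hb' : Der0O (extend r β) .bot
    · simp [beliefWeight, hb, hb', hφ, h0 hb']
    · simp [beliefWeight, hb, hb', hφ, der0O_extend hφ]
  · have hnφ := der0O_extend (β := β) (hd.resolve_left hφ)
    have : ¬(Der0O (extend r β) φ ∧ ¬Der0O (extend r β) .bot) := fun h => h.2 (.botI h.1 hnφ)
    simp [beliefWeight, hφ, this]

theorem MassStep.beliefWeight_of_closed [DecidableEq V] {m m' : Option (Sentence V) → ℝ}
    {r : Option (Sentence V)} {t t' : DBTree V} {φ : Sentence V} (h : MassStep m m' r t t')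
    (hc : TreeClosed r t φ) (h0 : ∀ α ∈ leafLabels r t', Der0O α .bot → m' α = 0) :
    MassStep (beliefWeight m φ) (beliefWeight m' φ) r t t' := by
  induction h with
  | keep he => exact .keep (by simp only [beliefWeight, he])
  | @split r β he =>
    have hr : Decides r φ := hc r (Finset.mem_singleton_self r)
    refine .split ?_
    rw [beliefWeight_extend hr (h0 _ (by simp [leafLabels])),
      beliefWeight_extend hr (h0 _ (by simp [leafLabels])), beliefWeight, ← he]
    split_ifs <;> simp
  | node _ _ ih₁ ih₂ =>
    exact .node
      (ih₁ (fun x hx => hc x (mem_leafLabels_node.2 (.inl hx)))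
        (fun x hx => h0 x (mem_leafLabels_node.2 (.inl hx))))
      (ih₂ (fun x hx => hc x (mem_leafLabels_node.2 (.inr hx)))
        (fun x hx => h0 x (mem_leafLabels_node.2 (.inr hx))))

theorem beliefWeight_of_mass_eq_zero {m : Option (Sentence V) → ℝ} {α : Option (Sentence V)}
    (hm : m α = 0) (φ : Sentence V) : beliefWeight m φ α = 0 := by
  simp [beliefWeight, hm]

theorem beliefWeight_of_model {m : Option (Sentence V) → ℝ} {α : Option (Sentence V)}
    {φ : Sentence V} {v : V → Bool} (hv : ∀ γ ∈ prems α, eval v γ = true) (hd : Decides α φ) :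
    beliefWeight m φ α = if eval v φ = true then m α else 0 := by
  simp [beliefWeight, der0O_iff_eval hv hd, not_der0O_bot_of_model hv]

section Forests

variable [DecidableEq V]

theorem DBFSeq.mem_leaves {F : DBFSeq V} {k : ℕ} {α : Option (Sentence V)} :
    α ∈ F.leaves k ↔ ∃ γ ∈ F.Supp, α ∈ leafLabels γ (F.tree γ k) :=
  Finset.mem_biUnion

theorem DBFSeq.leaves_zero (F : DBFSeq V) : F.leaves 0 = F.Supp := by
  calc F.leaves 0 = F.Supp.biUnion fun γ => {γ} :=
        Finset.biUnion_congr rfl fun γ hγ => by rw [F.init γ hγ]; rfl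
    _ = F.Supp := by simp

theorem DBFSeq.Closed.mono {F : DBFSeq V} {k j : ℕ} {φ : Sentence V} (h : F.Closed k φ)
    (hkj : k ≤ j) : F.Closed j φ := by
  induction j, hkj using Nat.le_induction with
  | base => exact h
  | succ n _ ih => exact fun γ hγ => (ih γ hγ).grow (F.grow γ hγ n)

theorem DBFSeq.Closed.decides {F : DBFSeq V} {k : ℕ} {φ : Sentence V} {α : Option (Sentence V)}
    (h : F.Closed k φ) (hα : α ∈ F.leaves k) : Decides α φ := by
  obtain ⟨γ, hγ, hαγ⟩ := DBFSeq.mem_leaves.1 hα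
  exact h γ hγ α hαγ

theorem DBMSeq.sum_sum_leafLabels_mass_eq_one (M : DBMSeq V) (k : ℕ) :
    ∑ γ ∈ M.Supp, ∑ α ∈ leafLabels γ (M.tree γ k), M.m k α = 1 := by
  induction k with
  | zero =>
    rw [← M.total 0, M.leaves_zero]
    exact Finset.sum_congr rfl fun γ hγ => by simp [M.init γ hγ, leafLabels]
  | succ k ih =>
    rw [← ih]
    exact Finset.sum_congr rfl fun γ hγ => (M.massStep γ hγ k).sum_eq

/-- The trees carry total mass `1`, as does the forest, so a label shared by several trees has
mass `0`; hence any `0 ≤ f ≤ m_k` may be summed tree by tree. -/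
theorem DBMSeq.sum_leaves_eq_sum_sum_leafLabels (M : DBMSeq V) (k : ℕ) {f : Option (Sentence V) → ℝ}
    (hf : ∀ α ∈ M.leaves k, 0 ≤ f α) (hfm : ∀ α ∈ M.leaves k, f α ≤ M.m k α) :
    ∑ α ∈ M.leaves k, f α = ∑ γ ∈ M.Supp, ∑ α ∈ leafLabels γ (M.tree γ k), f α :=
  Finset.sum_biUnion_eq_sum_sum_of_le hf hfm <| by
    rw [← DBFSeq.leaves, M.total, M.sum_sum_leafLabels_mass_eq_one]

theorem DBMSeq.B_eq_sum (M : DBMSeq V) (k : ℕ) (φ : Sentence V) :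
    M.B k φ = ∑ α ∈ M.leaves k, beliefWeight (M.m k) φ α :=
  rfl

theorem DBMSeq.beliefWeight_nonneg (M : DBMSeq V) {k : ℕ} (φ : Sentence V)
    {α : Option (Sentence V)} (hα : α ∈ M.leaves k) : 0 ≤ beliefWeight (M.m k) φ α := by
  unfold beliefWeight
  split_ifs
  exacts [M.nonneg k α hα, le_rfl]

theorem DBMSeq.beliefWeight_le_mass (M : DBMSeq V) {k : ℕ} (φ : Sentence V)
    {α : Option (Sentence V)} (hα : α ∈ M.leaves k) : beliefWeight (M.m k) φ α ≤ M.m k α := by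
  unfold beliefWeight
  split_ifs
  exacts [le_rfl, M.nonneg k α hα]

theorem DBMSeq.B_nonneg (M : DBMSeq V) (k : ℕ) (φ : Sentence V) : 0 ≤ M.B k φ :=
  Finset.sum_nonneg fun _ hα => M.beliefWeight_nonneg φ hα

theorem DBMSeq.B_le_one (M : DBMSeq V) (k : ℕ) (φ : Sentence V) : M.B k φ ≤ 1 :=
  (Finset.sum_le_sum fun _ hα => M.beliefWeight_le_mass φ hα).trans_eq (M.total k)

theorem DBMSeq.B_succ_of_closed (M : DBMSeq V) {k : ℕ} {φ : Sentence V}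
    (hc : M.Closed k φ) : M.B (k + 1) φ = M.B k φ := by
  have hsum j := M.sum_leaves_eq_sum_sum_leafLabels j (fun _ => M.beliefWeight_nonneg φ)
    (fun _ => M.beliefWeight_le_mass φ)
  rw [B_eq_sum, B_eq_sum, hsum, hsum]
  refine Finset.sum_congr rfl fun γ hγ => MassStep.sum_eq ?_
  exact (M.massStep γ hγ k).beliefWeight_of_closed (hc γ hγ) fun α hα =>
    M.incZero (k + 1) α (DBFSeq.mem_leaves.2 ⟨γ, hγ, hα⟩)

theorem DBMSeq.B_eq_of_le (M : DBMSeq V) {k j : ℕ} {φ : Sentence V} (hc : M.Closed k φ)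
    (hkj : k ≤ j) : M.B j φ = M.B k φ := by
  induction j, hkj using Nat.le_induction with
  | base => rfl
  | succ n hn ih => rw [M.B_succ_of_closed (hc.mono hn), ih]

theorem DBMSeq.mass_eq_zero_or_exists_model (M : DBMSeq V) {k : ℕ} {α : Option (Sentence V)}
    (hα : α ∈ M.leaves k) : M.m k α = 0 ∨ ∃ v : V → Bool, ∀ γ ∈ prems α, eval v γ = true := by
  by_cases hb : Der0O α .bot
  · exact .inl (M.incZero k α hα hb)
  obtain ⟨γ, hγ, hαγ⟩ := DBFSeq.mem_leaves.1 hα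
  have hcons : ¬CCO α .bot := mt (M.freeDC k γ hγ α hαγ) hb
  simp only [CCO, CC, eval, not_forall] at hcons
  obtain ⟨v, hv, -⟩ := hcons
  exact .inr ⟨v, hv⟩

theorem DBMSeq.B_eq_one_of_tautology (M : DBMSeq V) {k : ℕ} {φ : Sentence V}
    (hc : M.Closed k φ) (ht : CC ∅ φ) : M.B k φ = 1 := by
  rw [B_eq_sum, ← M.total k]
  refine Finset.sum_congr rfl fun α hα => ?_
  rcases M.mass_eq_zero_or_exists_model hα with hm | ⟨v, hv⟩
  · rw [beliefWeight_of_mass_eq_zero hm, hm]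
  · rw [beliefWeight_of_model hv (hc.decides hα), if_pos (ht v (by simp))]

theorem DBMSeq.B_disj (M : DBMSeq V) {k : ℕ} {θ φ : Sentence V} (hθ : M.Closed k θ)
    (hφ : M.Closed k φ) (hinc : CC ∅ (.neg (.conj θ φ))) :
    M.B k (.disj θ φ) = M.B k θ + M.B k φ := by
  simp only [B_eq_sum, ← Finset.sum_add_distrib]
  refine Finset.sum_congr rfl fun α hα => ?_
  rcases M.mass_eq_zero_or_exists_model hα with hm | ⟨v, hv⟩
  · simp only [beliefWeight_of_mass_eq_zero hm, add_zero]
  · have hθα := hθ.decides hα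
    have hφα := hφ.decides hα
    rw [beliefWeight_of_model hv (hθα.disj hφα), beliefWeight_of_model hv hθα,
      beliefWeight_of_model hv hφα]
    have hv' := hinc v (by simp)
    simp only [eval] at hv' ⊢
    by_cases hθv : eval v θ = true <;> by_cases hφv : eval v φ = true <;> simp_all

end Forests

theorem belief_limit_is_probability_general {V : Type} [DecidableEq V]
    (M : DBMSeq V) (hcl : ∀ φ : Sentence V, ∃ k, M.toDBFSeq.Closed k φ) :
    ∃ P : Sentence V → ℝ,
      (∀ φ : Sentence V, Filter.Tendsto (fun k => M.B k φ) Filter.atTop (nhds (P φ))) ∧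
      IsProbability P := by
  choose k hk using hcl
  have hstable : ∀ φ j, k φ ≤ j → M.B j φ = M.B (k φ) φ := fun φ _ => M.B_eq_of_le (hk φ)
  refine ⟨fun φ => M.B (k φ) φ, fun φ => tendsto_atTop_of_eventually_const (hstable φ),
    fun φ => ⟨M.B_nonneg _ φ, M.B_le_one _ φ⟩, fun φ hφ => M.B_eq_one_of_tautology (hk φ) hφ,
    fun θ φ hinc => ?_⟩
  show M.B _ _ = M.B _ _ + M.B _ _
  set K := max (k θ) (max (k φ) (k (.disj θ φ)))
  rw [← hstable θ K (by omega), ← hstable φ K (by omega), ← hstable _ K (by omega)]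
  exact M.B_disj ((hk θ).mono (by omega)) ((hk φ).mono (by omega)) hinc

/-- For a DBM-sequence whose underlying DBF-sequence is SL-closed (and free of
deep contradictions), the limit `P(φ) = lim_k B_k(φ)` exists for every `φ ∈ SL` and the
resulting function is a probability function. -/
theorem belief_limit_is_probability {V : Type} [DecidableEq V] [Fintype V]
    (M : DBMSeq V) (hcl : ∀ φ : Sentence V, ∃ k, M.toDBFSeq.Closed k φ) :
    ∃ P : Sentence V → ℝ,
      (∀ φ : Sentence V, Filter.Tendsto (fun k => M.B k φ) Filter.atTop (nhds (P φ))) ∧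
      IsProbability P :=
  belief_limit_is_probability_general M hcl

end DBB
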